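/- The quotient of the set of 1-formulas of L_□ by the relation of S5-provable equivalence has exactly 2^32 = 4,294,967,296 elements. -/

import Mathlib

namespace KripkeModal

/-- Formulas of the modal language `L_□`: atoms `T(x)`, `F(x)` for variables
`x : ℕ`, negation, conjunction, and box. -/
inductive Fml : Type
  | tt : ℕ → Fml   -- T(x)
  | ff : ℕ → Fml   -- F(x)
  | neg : Fml → Fml
  | and : Fml → Fml → Fml
  | box : Fml → Fml
deriving DecidableEq

namespace Fml

/-- Material implication, defined from `¬, ∧`. -/
def imp (φ ψ : Fml) : Fml := neg (and φ (neg ψ))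

/-- Disjunction, defined from `¬, ∧`. -/
def or (φ ψ : Fml) : Fml := neg (and (neg φ) (neg ψ))

/-- Biconditional. -/
def iff (φ ψ : Fml) : Fml := and (imp φ ψ) (imp ψ φ)

/-- Diamond: `◇φ := ¬□¬φ`. -/
def dia (φ : Fml) : Fml := neg (box (neg φ))

/-- `N(x) := ¬T(x) ∧ ¬F(x)`. -/
def Nf (x : ℕ) : Fml := and (neg (tt x)) (neg (ff x))

/-- A fixed contradiction. -/
def bot : Fml := and (tt 0) (neg (tt 0))

end Fml

open Fml

/-- Evaluate a formula propositionally under a valuation `v` of the "atoms":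
the atomic formulas `T(x)`, `F(x)` and all boxed formulas are treated as
propositional atoms. -/
def evalProp (v : Fml → Bool) : Fml → Bool
  | Fml.neg φ => !(evalProp v φ)
  | Fml.and φ ψ => evalProp v φ && evalProp v ψ
  | φ => v φ

/-- A formula is a substitution instance of a classical propositional tautology
iff it evaluates to true under every propositional valuation of its atoms. -/
def Tautology (φ : Fml) : Prop := ∀ v : Fml → Bool, evalProp v φ = true

/-- Provability in the modal system `S5[Ax]`: the smallest set of formulas
containing all substitution instances of propositional tautologies, all
instances of K, T and 5, all formulas in `Ax`, closed under modus ponens and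
necessitation.  Taking `Ax = ∅` gives `S5` itself. -/
inductive Prv (Ax : Set Fml) : Fml → Prop
  | taut {φ} : Tautology φ → Prv Ax φ
  | axK (A B : Fml) : Prv Ax (imp (box (imp A B)) (imp (box A) (box B)))
  | axT (A : Fml) : Prv Ax (imp (box A) A)
  | ax5 (A : Fml) : Prv Ax (imp (dia A) (box (dia A)))
  | axm {φ} : φ ∈ Ax → Prv Ax φ
  | mp {A B} : Prv Ax (imp A B) → Prv Ax A → Prv Ax B
  | nec {A} : Prv Ax A → Prv Ax (box A)

/-- A system is consistent if it does not prove a contradiction. -/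
def Consistent (Ax : Set Fml) : Prop := ¬ Prv Ax Fml.bot

/-- The axiom schema `Con`: `¬(T(x) ∧ F(x))`. -/
def ConAx : Set Fml := { φ | ∃ x : ℕ, φ = neg (and (tt x) (ff x)) }

/-- The axiom schema `Ground`: `(◇T(x) ∧ ◇F(x)) → ◇N(x)`. -/
def GroundAx : Set Fml :=
  { φ | ∃ x : ℕ, φ = imp (and (dia (tt x)) (dia (ff x))) (dia (Nf x)) }

/-- Conjunction of a list of formulas (empty conjunction is `¬⊥`). -/
def bigAnd : List Fml → Fml
  | [] => Fml.neg Fml.bot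
  | [φ] => φ
  | φ :: ψ :: rest => Fml.and φ (bigAnd (ψ :: rest))

/-- Disjunction of a list of formulas (the empty disjunction is the fixed
contradiction `⊥`). -/
def bigOr : List Fml → Fml
  | [] => Fml.bot
  | [φ] => φ
  | φ :: ψ :: rest => Fml.or φ (bigOr (ψ :: rest))

/-- The axiom schema `Min_n`: all instances
`(◇N(x_1) ∧ … ∧ ◇N(x_n)) → ◇(N(x_1) ∧ … ∧ N(x_n))` obtained by substituting
arbitrary (not necessarily distinct) variables for `x_1, …, x_n`. -/
def MinAx (n : ℕ) : Set Fml :=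
  { φ | ∃ l : List ℕ, l.length = n ∧
      φ = imp (bigAnd (l.map (fun x => dia (Nf x)))) (dia (bigAnd (l.map Nf))) }

/-- A formula is extensional if it contains no `□`. -/
def Extensional : Fml → Prop
  | tt _ => True
  | ff _ => True
  | Fml.neg φ => Extensional φ
  | Fml.and φ ψ => Extensional φ ∧ Extensional ψ
  | box _ => False

/-- A formula is intensional if every atomic subformula occurs within the
scope of a `□`. -/
def Intensional : Fml → Prop
  | tt _ => False
  | ff _ => False
  | Fml.neg φ => Intensional φ
  | Fml.and φ ψ => Intensional φ ∧ Intensional ψ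
  | box _ => True

/-- The set of variables occurring in a formula. -/
def vars : Fml → Set ℕ
  | tt x => {x}
  | ff x => {x}
  | Fml.neg φ => vars φ
  | Fml.and φ ψ => vars φ ∪ vars ψ
  | box φ => vars φ

/-- An `n`-formula: one whose atoms use only the variables `x_1, …, x_n`. -/
def IsNFormula (n : ℕ) (φ : Fml) : Prop := vars φ ⊆ {x | 1 ≤ x ∧ x ≤ n}

/-- A 1-formula: one whose atoms use only the single variable `x_1`. -/
abbrev Is1Formula (φ : Fml) : Prop := IsNFormula 1 φ

/-- `φ` is `Γ`-maximal for the system `S5[Ax]`. -/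
def GammaMaximal (Ax : Set Fml) (Γ : Set Fml) (φ : Fml) : Prop :=
  Consistent (Ax ∪ {φ}) ∧ φ ∈ Γ ∧
    ∀ ψ ∈ Γ, Prv Ax (imp φ ψ) ∨ Prv Ax (imp φ (neg ψ))

/-- Extensional `n`-isolators for `S5[Ax]`. -/
def ExtIsolator (n : ℕ) (Ax : Set Fml) (φ : Fml) : Prop :=
  GammaMaximal Ax {ψ | Extensional ψ ∧ IsNFormula n ψ} φ

/-- Intensional `n`-isolators for `S5[Ax]`. -/
def IntIsolator (n : ℕ) (Ax : Set Fml) (φ : Fml) : Prop :=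
  GammaMaximal Ax {ψ | Intensional ψ ∧ IsNFormula n ψ} φ

/-- An `n`-isolator for `S5[Ax]`: a consistent conjunction `ε ∧ ι` of an
extensional `n`-isolator and an intensional `n`-isolator. -/
def Isolator (n : ℕ) (Ax : Set Fml) (φ : Fml) : Prop :=
  ∃ ε ι, ExtIsolator n Ax ε ∧ IntIsolator n Ax ι ∧
    φ = Fml.and ε ι ∧ Consistent (Ax ∪ {φ})

/-- Satisfaction in a model `(W, V)` (with `V = (V1, V2)`) at a world `w`. -/
def Sat {W : Type*} (V1 V2 : ℕ → Set W) : W → Fml → Prop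
  | w, tt x => w ∈ V1 x
  | w, ff x => w ∈ V2 x
  | w, Fml.neg φ => ¬ Sat V1 V2 w φ
  | w, Fml.and φ ψ => Sat V1 V2 w φ ∧ Sat V1 V2 w ψ
  | _, box φ => ∀ v, Sat V1 V2 v φ

/-- The variable assignment satisfies the `Con` constraint. -/
def ConC {W : Type*} (V1 V2 : ℕ → Set W) : Prop := ∀ x, V1 x ∩ V2 x = ∅

/-- The variable assignment satisfies the `Ground` constraint. -/
def GroundC {W : Type*} (V1 V2 : ℕ → Set W) : Prop :=
  ∀ x, (V1 x).Nonempty → (V2 x).Nonempty → ((V1 x ∪ V2 x)ᶜ : Set W).Nonempty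

/-- The variable assignment satisfies the `Min` constraint. -/
def MinC {W : Type*} (V1 V2 : ℕ → Set W) : Prop :=
  ∀ l : List ℕ, l ≠ [] → (∀ x ∈ l, ((V1 x ∪ V2 x)ᶜ : Set W).Nonempty) →
    (⋂ x ∈ l, ((V1 x ∪ V2 x)ᶜ : Set W)).Nonempty

/-- The prime conditions for a subset `S` of the tensor `[3]^n`, realized as
`Fin n → Fin 3` where the value `0` stands for the layer `T`, `1` for `F`,
and `2` for `N` (i.e. `1, 2, 3` in the paper's numbering). -/
def PrimeConditions (n : ℕ) (S : Set (Fin n → Fin 3)) : Prop :=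
  S.Nonempty ∧
  (∀ j : Fin n, (S ∩ {a | a j = 0}).Nonempty → (S ∩ {a | a j = 1}).Nonempty →
      (S ∩ {a | a j = 2}).Nonempty) ∧
  ∀ J : Set (Fin n), J.Nonempty →
    (∀ j ∈ J, (S ∩ {a | a j = 2}).Nonempty) →
    (S ∩ ⋂ j ∈ J, {a | a j = 2}).Nonempty

/-- `χ_1 = T`, `χ_2 = F`, `χ_3 = N` (with `Fin 3` values `0, 1, 2`). -/
def chi (k : Fin 3) (x : ℕ) : Fml :=
  if k = 0 then tt x else if k = 1 then ff x else Nf x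

/-- The extensional `n`-isolator `φ_a = χ_{a_1}(x_1) ∧ … ∧ χ_{a_n}(x_n)`
associated with a tuple `a ∈ [3]^n`. -/
def tupleFml {n : ℕ} (a : Fin n → Fin 3) : Fml :=
  bigAnd ((List.finRange n).map (fun i => chi (a i) (i.1 + 1)))

open Classical in
/-- The pre-`n`-isolator of `S ⊆ [3]^n`:
`⋀_{a ∈ S} ◇φ_a ∧ ⋀_{a ∉ S} ¬◇φ_a`. -/
noncomputable def preIsolator (n : ℕ) (S : Set (Fin n → Fin 3)) : Fml :=
  bigAnd (((Finset.univ : Finset (Fin n → Fin 3)).toList).map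
    (fun a => if a ∈ S then dia (tupleFml a) else Fml.neg (dia (tupleFml a))))

/-!
A 1-formula only sees, at each world, the state of `x₁`: one of the four truth-value pairs
of `T(x₁)`, `F(x₁)`. Up to bisimulation an S5 model is then a set `S` of states with a designated
state `s ∈ S`; there are `∑ₖ k·C(4,k) = 32` such pointed models. By soundness, S5-equivalent
formulas hold at the same pointed models. Conversely, the characteristic formula
`charFml S s = δₛ ∧ ⋀_{t ∈ S} ◇δₜ ∧ ⋀_{t ∉ S} ¬◇δₜ` of `(S, s)`, with `δₜ = t.fml`, decides every
1-formula, by induction on the formula: its modal part `profile S` is rigid (it implies its own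
necessitation, by 5 and 4), which handles `□`. As the characteristic formulas propositionally exhaust all cases, every 1-formula is
provably equivalent to the disjunction of those of its pointed models, and every set of pointed
models is defined by such a disjunction. So the equivalence classes correspond to the `2^32`
sets of pointed models.
-/

section Propositional

variable {Ax : Set Fml}

theorem Prv.of_entails {Γ : List Fml} {φ : Fml} (hΓ : ∀ ψ ∈ Γ, Prv Ax ψ)
    (h : ∀ v, (∀ ψ ∈ Γ, evalProp v ψ = true) → evalProp v φ = true) : Prv Ax φ := by
  induction Γ generalizing φ with
  | nil => exact Prv.taut fun v => h v (by simp)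
  | cons ψ Γ ih =>
    refine Prv.mp (ih (fun χ hχ => hΓ χ (by simp [hχ])) fun v hv => ?_) (hΓ ψ (by simp))
    cases hψ : evalProp v ψ
    · simp [imp, evalProp, hψ]
    · simpa [imp, evalProp, hψ] using h v (List.forall_mem_cons.2 ⟨hψ, hv⟩)

@[simp]
theorem evalProp_imp (v : Fml → Bool) (φ ψ : Fml) :
    evalProp v (imp φ ψ) = true ↔ (evalProp v φ = true → evalProp v ψ = true) := by
  cases h : evalProp v φ <;> simp [imp, evalProp, h]

theorem Prv.of_forall_entails {ι : Type*} [Fintype ι] {Γ : ι → Fml} {φ : Fml}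
    (hΓ : ∀ i, Prv Ax (Γ i))
    (h : ∀ v, (∀ i, evalProp v (Γ i) = true) → evalProp v φ = true) : Prv Ax φ :=
  Prv.of_entails (Γ := Finset.univ.toList.map Γ) (by simpa using hΓ) fun v hv =>
    h v fun i => hv _ (List.mem_map_of_mem (Finset.mem_toList.2 (Finset.mem_univ i)))

theorem Prv.taut_mp {A B : Fml} (ht : Tautology (imp A B)) (hA : Prv Ax A) : Prv Ax B :=
  Prv.mp (Prv.taut ht) hA

theorem Prv.taut_mp₂ {A B C : Fml} (ht : Tautology (imp A (imp B C))) (hA : Prv Ax A)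
    (hB : Prv Ax B) : Prv Ax C :=
  Prv.mp (Prv.taut_mp ht hA) hB

theorem Prv.taut_mp₃ {A B C D : Fml} (ht : Tautology (imp A (imp B (imp C D)))) (hA : Prv Ax A)
    (hB : Prv Ax B) (hC : Prv Ax C) : Prv Ax D :=
  Prv.mp (Prv.taut_mp₂ ht hA hB) hC

theorem Prv.imp_trans {A B C : Fml} (hAB : Prv Ax (imp A B)) (hBC : Prv Ax (imp B C)) :
    Prv Ax (imp A C) :=
  Prv.taut_mp₂ (fun v => by simp [imp, evalProp]; grind) hAB hBC

/-- Falsum in the variable `x₁`: the library's `Fml.bot` mentions `x₀`, so is no 1-formula. -/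
def falsum : Fml := and (tt 1) (neg (tt 1))

def conj (l : List Fml) : Fml := l.foldr and (neg falsum)

def disj (l : List Fml) : Fml := l.foldr Fml.or falsum

@[simp]
theorem evalProp_conj (v : Fml → Bool) (l : List Fml) :
    evalProp v (conj l) = true ↔ ∀ φ ∈ l, evalProp v φ = true := by
  induction l with
  | nil => simp [conj, falsum, evalProp]
  | cons φ l ih => simp [← ih, conj, evalProp]

@[simp]
theorem evalProp_disj (v : Fml → Bool) (l : List Fml) :
    evalProp v (disj l) = true ↔ ∃ φ ∈ l, evalProp v φ = true := by
  induction l with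
  | nil => simp [disj, falsum, evalProp]
  | cons φ l ih => simp [← ih, disj, Fml.or, evalProp]

theorem Prv.imp_disj_of_mem {φ : Fml} {l : List Fml} (h : φ ∈ l) : Prv Ax (imp φ (disj l)) :=
  Prv.taut fun v => by simp only [evalProp_imp, evalProp_disj]; exact fun hφ => ⟨φ, h, hφ⟩

theorem Prv.disj_imp {l : List Fml} {C : Fml} (h : ∀ φ ∈ l, Prv Ax (imp φ C)) :
    Prv Ax (imp (disj l) C) := by
  induction l with
  | nil => exact Prv.taut fun v => by simp [disj, falsum, imp, evalProp]
  | cons φ l ih =>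
    simp only [List.forall_mem_cons] at h
    exact Prv.taut_mp₂ (fun v => by simp [imp, disj, Fml.or, evalProp]; grind) h.1 (ih h.2)

end Propositional

section Modal

variable {Ax : Set Fml}

theorem Prv.box_mono {A B : Fml} (h : Prv Ax (imp A B)) : Prv Ax (imp (box A) (box B)) :=
  Prv.mp (Prv.axK A B) (Prv.nec h)

theorem Prv.imp_dia (A : Fml) : Prv Ax (imp A (dia A)) :=
  Prv.taut_mp (fun v => by simp [dia, evalProp]; grind) (Prv.axT (neg A))

/-- Axiom 5 for `¬A`, read through `□A ↔ □¬¬A`. -/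
theorem Prv.neg_box_imp_box_neg_box (A : Fml) :
    Prv Ax (imp (neg (box A)) (box (neg (box A)))) := by
  have hA : Prv Ax (imp (box A) (box (neg (neg A)))) :=
    Prv.box_mono (Prv.taut fun v => by simp [evalProp])
  have hA' : Prv Ax (imp (box (neg (neg A))) (box A)) :=
    Prv.box_mono (Prv.taut fun v => by simp [evalProp])
  have h : Prv Ax (imp (box (dia (neg A))) (box (neg (box A)))) :=
    Prv.box_mono (Prv.taut_mp (fun v => by simp [dia, evalProp]; grind) hA)
  exact Prv.taut_mp₃ (fun v => by simp [dia, evalProp]; grind) hA' (Prv.ax5 (neg A)) h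

theorem Prv.box_imp_box_box (A : Fml) : Prv Ax (imp (box A) (box (box A))) := by
  have h : Prv Ax (imp (dia (box A)) (box A)) :=
    Prv.taut_mp (fun v => by simp [imp, dia, evalProp]; grind) (Prv.neg_box_imp_box_neg_box A)
  exact (Prv.imp_dia _).imp_trans ((Prv.ax5 _).imp_trans (Prv.box_mono h))

theorem Prv.neg_dia_imp_box (A : Fml) : Prv Ax (imp (neg (dia A)) (box (neg (dia A)))) := by
  have h : Prv Ax (imp (box (box (neg A))) (box (neg (dia A)))) :=
    Prv.box_mono (Prv.taut fun v => by simp [imp, dia, evalProp])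
  exact Prv.taut_mp₂ (fun v => by simp [imp, dia, evalProp]; grind)
    (Prv.box_imp_box_box (neg A)) h

theorem Prv.box_imp_box_imp_box_and (A B : Fml) :
    Prv Ax (imp (box A) (imp (box B) (box (and A B)))) :=
  (Prv.box_mono (Prv.taut fun v => by simp [imp, evalProp]; grind)).imp_trans (Prv.axK B _)

theorem Prv.conj_imp_box {l : List Fml} (h : ∀ φ ∈ l, Prv Ax (imp φ (box φ))) :
    Prv Ax (imp (conj l) (box (conj l))) := by
  induction l with
  | nil =>
    exact Prv.taut_mp (fun v => by simp [imp, evalProp]; grind)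
      (Prv.nec (Prv.taut (φ := conj []) fun v => by simp [conj, falsum, evalProp]))
  | cons φ l ih =>
    simp only [List.forall_mem_cons] at h
    exact Prv.taut_mp₃ (fun v => by simp [imp, conj, evalProp]; grind) h.1 (ih h.2)
      (Prv.box_imp_box_imp_box_and φ (conj l))

theorem Prv.imp_box_of_rigid {A B : Fml} (hA : Prv Ax (imp A (box A))) (h : Prv Ax (imp A B)) :
    Prv Ax (imp A (box B)) :=
  hA.imp_trans (Prv.box_mono h)

theorem Prv.imp_neg_box_of_rigid {A B C : Fml} (hA : Prv Ax (imp A (box A)))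
    (hC : Prv Ax (imp A (dia C))) (h : Prv Ax (imp (and C A) (neg B))) :
    Prv Ax (imp A (neg (box B))) := by
  have hBC : Prv Ax (imp (box A) (box (imp B (neg C)))) :=
    Prv.box_mono (Prv.taut_mp (fun v => by simp [imp, evalProp]; grind) h)
  have hK : Prv Ax (imp A (imp (box B) (box (neg C)))) :=
    hA.imp_trans (hBC.imp_trans (Prv.axK _ _))
  exact Prv.taut_mp₂ (fun v => by simp [imp, dia, evalProp]; grind) hK hC

end Modal

section CharacteristicFormulas

variable {Ax : Set Fml}

/-- A state of `x₁`: whether `T(x₁)` and whether `F(x₁)` holds. -/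
abbrev State := Bool × Bool

def lit (b : Bool) (φ : Fml) : Fml := cond b φ (neg φ)

def State.fml (s : State) : Fml := and (lit s.1 (tt 1)) (lit s.2 (ff 1))

noncomputable def profile (S : Finset State) : Fml :=
  conj ((Finset.univ : Finset State).toList.map fun t => lit (decide (t ∈ S)) (dia t.fml))

noncomputable def charFml (S : Finset State) (s : State) : Fml := and s.fml (profile S)

@[simp]
theorem evalProp_lit (v : Fml → Bool) (b : Bool) (φ : Fml) :
    evalProp v (lit b φ) = true ↔ evalProp v φ = b := by
  cases b <;> simp [lit, evalProp]

theorem evalProp_fml (v : Fml → Bool) (s : State) :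
    evalProp v s.fml = true ↔ v (tt 1) = s.1 ∧ v (ff 1) = s.2 := by
  simp [State.fml, evalProp]

theorem evalProp_profile (v : Fml → Bool) (S : Finset State) :
    evalProp v (profile S) = true ↔ ∀ t, evalProp v (dia t.fml) = decide (t ∈ S) := by
  simp only [profile, evalProp_conj, List.mem_map, Finset.mem_toList, Finset.mem_univ, true_and,
    forall_exists_index, forall_apply_eq_imp_iff, evalProp_lit]

theorem evalProp_charFml (v : Fml → Bool) (S : Finset State) (s : State) :
    evalProp v (charFml S s) = true ↔
      evalProp v s.fml = true ∧ evalProp v (profile S) = true := by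
  simp [charFml, evalProp]

theorem Prv.profile_imp_box (S : Finset State) : Prv Ax (imp (profile S) (box (profile S))) := by
  refine Prv.conj_imp_box fun φ hφ => ?_
  obtain ⟨t, -, rfl⟩ := List.mem_map.1 hφ
  by_cases ht : t ∈ S
  · simpa [ht, lit] using Prv.ax5 t.fml
  · simpa [ht, lit] using Prv.neg_dia_imp_box t.fml

theorem Prv.profile_imp_dia {S : Finset State} {t : State} (ht : t ∈ S) :
    Prv Ax (imp (profile S) (dia t.fml)) :=
  Prv.taut fun v => by
    rw [evalProp_imp, evalProp_profile]
    intro h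
    simpa [ht] using h t

/-- `charFml S t` contains `¬◇δₜ`, which `δₜ → ◇δₜ` refutes. -/
theorem Prv.charFml_imp_of_not_mem {S : Finset State} {t : State} (ht : t ∉ S) (C : Fml) :
    Prv Ax (imp (charFml S t) C) :=
  Prv.taut_mp (A := imp t.fml (dia t.fml)) (fun v => by
      simp only [evalProp_imp, evalProp_charFml, evalProp_profile]
      rintro hdia ⟨hfml, hprof⟩
      simpa [ht, hdia hfml] using hprof t) (Prv.imp_dia t.fml)

theorem Prv.profile_imp_of_forall {S : Finset State} {C : Fml}
    (h : ∀ t, Prv Ax (imp (charFml S t) C)) : Prv Ax (imp (profile S) C) :=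
  Prv.of_forall_entails h fun v hv => by
    simpa [evalProp_charFml, evalProp_fml] using hv (v (tt 1), v (ff 1))

theorem Prv.of_forall_profile {C : Fml} (h : ∀ S, Prv Ax (imp (profile S) C)) : Prv Ax C :=
  Prv.of_forall_entails h fun v hv => by
    have hS := hv (Finset.univ.filter fun t => evalProp v (dia t.fml))
    rw [evalProp_imp, evalProp_profile] at hS
    exact hS fun t => by simp

theorem Prv.profile_imp_box_of_forall {S : Finset State} {φ : Fml}
    (h : ∀ w : S, Prv Ax (imp (charFml S w) φ)) : Prv Ax (imp (profile S) (box φ)) :=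
  Prv.imp_box_of_rigid (Prv.profile_imp_box S) <| Prv.profile_imp_of_forall fun t =>
    if ht : t ∈ S then h ⟨t, ht⟩ else Prv.charFml_imp_of_not_mem ht φ

theorem Prv.profile_imp_neg_box {S : Finset State} {φ : Fml} (w : S)
    (h : Prv Ax (imp (charFml S w) (neg φ))) : Prv Ax (imp (profile S) (neg (box φ))) :=
  Prv.imp_neg_box_of_rigid (Prv.profile_imp_box S) (Prv.profile_imp_dia w.2) h

end CharacteristicFormulas

section Semantics

variable {W : Type*} {V1 V2 : ℕ → Set W} {w : W}

@[simp]
theorem sat_imp {φ ψ : Fml} :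
    Sat V1 V2 w (imp φ ψ) ↔ (Sat V1 V2 w φ → Sat V1 V2 w ψ) := by
  simp only [imp, Sat, not_and, not_not]

@[simp]
theorem sat_dia {φ : Fml} : Sat V1 V2 w (dia φ) ↔ ∃ u, Sat V1 V2 u φ := by
  simp only [dia, Sat, not_forall, not_not]

@[simp]
theorem sat_lit {b : Bool} {φ : Fml} :
    Sat V1 V2 w (lit b φ) ↔ (Sat V1 V2 w φ ↔ b = true) := by
  cases b <;> simp [lit, Sat]

@[simp]
theorem sat_conj {l : List Fml} : Sat V1 V2 w (conj l) ↔ ∀ φ ∈ l, Sat V1 V2 w φ := by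
  induction l with
  | nil => simp [conj, falsum, Sat]
  | cons φ l ih => simp [conj, Sat, ← ih]

@[simp]
theorem sat_disj {l : List Fml} : Sat V1 V2 w (disj l) ↔ ∃ φ ∈ l, Sat V1 V2 w φ := by
  induction l with
  | nil => simp [disj, falsum, Sat]
  | cons φ l ih => simp [disj, Fml.or, Sat, ← ih]; tauto

open Classical in
theorem evalProp_decide_sat (V1 V2 : ℕ → Set W) (w : W) (φ : Fml) :
    evalProp (fun ψ => decide (Sat V1 V2 w ψ)) φ = true ↔ Sat V1 V2 w φ := by
  induction φ with
  | neg φ ih => simp [evalProp, Sat, ← ih]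
  | and φ ψ ihφ ihψ => simp [evalProp, Sat, ← ihφ, ← ihψ]
  | _ => simp [evalProp]

theorem Prv.sat {φ : Fml} (h : Prv ∅ φ) (V1 V2 : ℕ → Set W) (w : W) : Sat V1 V2 w φ := by
  induction h generalizing w with
  | taut ht => classical exact (evalProp_decide_sat V1 V2 w _).1 (ht _)
  | axK A B => simp only [sat_imp, Sat]; exact fun hAB hA u => hAB u (hA u)
  | axT A => simp only [sat_imp, Sat]; exact fun hA => hA w
  | ax5 A => simp only [sat_imp, sat_dia, Sat]; exact fun hA _ => hA
  | axm hφ => exact absurd hφ (Set.notMem_empty _)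
  | mp _ _ ihAB ihA => exact sat_imp.1 (ihAB w) (ihA w)
  | nec _ ih => exact fun u => ih u

end Semantics

section CanonicalModel

abbrev Holds (S : Finset State) : S → Fml → Prop :=
  Sat (fun _ => {w | (w : State).1 = true}) (fun _ => {w | (w : State).2 = true})

variable {S : Finset State} {w : S}

theorem holds_fml {t : State} : Holds S w t.fml ↔ (w : State) = t := by
  obtain ⟨⟨a, b⟩, _⟩ := w
  obtain ⟨c, d⟩ := t
  cases a <;> cases b <;> cases c <;> cases d <;> simp [Holds, State.fml, Sat]

theorem holds_dia_fml {t : State} : Holds S w (dia t.fml) ↔ t ∈ S := by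
  simp only [Holds, sat_dia]
  exact ⟨fun ⟨u, hu⟩ => holds_fml.1 hu ▸ u.2,
    fun ht => ⟨⟨t, ht⟩, holds_fml.2 rfl⟩⟩

theorem holds_profile {S' : Finset State} : Holds S w (profile S') ↔ S' = S := by
  simp only [profile, sat_conj, List.mem_map, Finset.mem_toList, Finset.mem_univ, true_and,
    forall_exists_index, forall_apply_eq_imp_iff, sat_lit, holds_dia_fml, decide_eq_true_eq]
  rw [Finset.ext_iff]
  exact forall_congr' fun _ => Iff.comm

theorem holds_charFml {S' : Finset State} {t : State} :
    Holds S w (charFml S' t) ↔ (w : State) = t ∧ S' = S :=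
  and_congr holds_fml holds_profile

end CanonicalModel

section IsNFormula

variable {n : ℕ}

@[simp]
theorem isNFormula_tt {x : ℕ} : IsNFormula n (tt x) ↔ 1 ≤ x ∧ x ≤ n := by
  simp [IsNFormula, vars]

@[simp]
theorem isNFormula_ff {x : ℕ} : IsNFormula n (ff x) ↔ 1 ≤ x ∧ x ≤ n := by
  simp [IsNFormula, vars]

@[simp]
theorem isNFormula_neg {φ : Fml} : IsNFormula n (neg φ) ↔ IsNFormula n φ := Iff.rfl

@[simp]
theorem isNFormula_and {φ ψ : Fml} :
    IsNFormula n (and φ ψ) ↔ IsNFormula n φ ∧ IsNFormula n ψ :=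
  Set.union_subset_iff

@[simp]
theorem isNFormula_box {φ : Fml} : IsNFormula n (box φ) ↔ IsNFormula n φ := Iff.rfl

@[simp]
theorem isNFormula_lit {b : Bool} {φ : Fml} : IsNFormula n (lit b φ) ↔ IsNFormula n φ := by
  cases b <;> simp [lit]

end IsNFormula

theorem is1Formula_conj {l : List Fml} (h : ∀ φ ∈ l, Is1Formula φ) : Is1Formula (conj l) := by
  induction l with
  | nil => simp [conj, falsum]
  | cons φ l ih => simp_all [conj]

theorem is1Formula_disj {l : List Fml} (h : ∀ φ ∈ l, Is1Formula φ) : Is1Formula (disj l) := by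
  induction l with
  | nil => simp [disj, falsum]
  | cons φ l ih => simp_all [disj, Fml.or]

theorem is1Formula_charFml (S : Finset State) (s : State) : Is1Formula (charFml S s) := by
  refine isNFormula_and.2 ⟨by simp [State.fml], is1Formula_conj fun φ hφ => ?_⟩
  obtain ⟨t, -, rfl⟩ := List.mem_map.1 hφ
  simp [State.fml, dia]

section Completeness

variable {Ax : Set Fml}

theorem Prv.charFml_imp_profile (S : Finset State) (t : State) :
    Prv Ax (imp (charFml S t) (profile S)) :=
  Prv.taut fun v => by simp [evalProp_charFml]

theorem prv_charFml_imp_of_holds {φ : Fml} (hφ : Is1Formula φ) (S : Finset State) (w : S) :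
    (Holds S w φ → Prv Ax (imp (charFml S w) φ)) ∧
      (¬ Holds S w φ → Prv Ax (imp (charFml S w) (neg φ))) := by
  induction φ generalizing w with
  | tt x =>
    obtain rfl : x = 1 := by simp at hφ; omega
    have h : Prv Ax (imp (charFml S w) (lit (w : State).1 (tt 1))) :=
      Prv.taut fun v => by simp +contextual [evalProp_charFml, evalProp_fml, evalProp]
    obtain ⟨⟨_ | _, _⟩, _⟩ := w <;> simpa [Sat, lit] using h
  | ff x =>
    obtain rfl : x = 1 := by simp at hφ; omega
    have h : Prv Ax (imp (charFml S w) (lit (w : State).2 (ff 1))) :=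
      Prv.taut fun v => by simp +contextual [evalProp_charFml, evalProp_fml, evalProp]
    obtain ⟨⟨_, _ | _⟩, _⟩ := w <;> simpa [Sat, lit] using h
  | neg φ ih =>
    obtain ⟨ih₁, ih₂⟩ := ih hφ w
    exact ⟨ih₂, fun h => Prv.taut_mp (fun v => by simp [evalProp]) (ih₁ (not_not.1 h))⟩
  | and φ ψ ihφ ihψ =>
    simp only [isNFormula_and] at hφ
    obtain ⟨ihφ₁, ihφ₂⟩ := ihφ hφ.1 w
    obtain ⟨ihψ₁, ihψ₂⟩ := ihψ hφ.2 w
    refine ⟨fun h => Prv.taut_mp₂ (fun v => by simp [evalProp]; grind)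
      (ihφ₁ h.1) (ihψ₁ h.2), fun h => ?_⟩
    by_cases h₁ : Holds S w φ
    · exact Prv.taut_mp (fun v => by simp [evalProp]; grind)
        (ihψ₂ fun h₂ => h ⟨h₁, h₂⟩)
    · exact Prv.taut_mp (fun v => by simp [evalProp]; grind) (ihφ₂ h₁)
  | box φ ih =>
    refine ⟨fun h => ?_, fun h => ?_⟩
    · exact (Prv.charFml_imp_profile S w).imp_trans
        (Prv.profile_imp_box_of_forall fun u => (ih hφ u).1 (h u))
    · obtain ⟨u, hu⟩ := not_forall.1 h
      exact (Prv.charFml_imp_profile S w).imp_trans (Prv.profile_imp_neg_box u ((ih hφ u).2 hu))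

abbrev Pointed := {p : Finset State × State // p.2 ∈ p.1}

def Pointed.Satisfies (p : Pointed) : Fml → Prop := Holds p.1.1 ⟨p.1.2, p.2⟩

theorem Pointed.satisfies_iff_of_prv {φ ψ : Fml} (h : Prv ∅ (Fml.iff φ ψ)) (p : Pointed) :
    p.Satisfies φ ↔ p.Satisfies ψ := by
  have hiff : Holds p.1.1 ⟨p.1.2, p.2⟩ (Fml.iff φ ψ) := Prv.sat h _ _ _
  simp only [Fml.iff, Sat, sat_imp] at hiff
  exact ⟨hiff.1, hiff.2⟩

open Classical in
noncomputable def normalForm (A : Pointed → Prop) : Fml :=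
  disj ((Finset.univ.filter A).toList.map fun p => charFml p.1.1 p.1.2)

theorem is1Formula_normalForm (A : Pointed → Prop) : Is1Formula (normalForm A) := by
  refine is1Formula_disj fun φ hφ => ?_
  obtain ⟨p, -, rfl⟩ := List.mem_map.1 hφ
  exact is1Formula_charFml _ _

theorem Pointed.satisfies_normalForm (A : Pointed → Prop) (p : Pointed) :
    p.Satisfies (normalForm A) ↔ A p := by
  simp only [Pointed.Satisfies, normalForm, sat_disj, List.mem_map, Finset.mem_toList,
    Finset.mem_filter, Finset.mem_univ, true_and]
  constructor
  · rintro ⟨_, ⟨q, hq, rfl⟩, hpq⟩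
    obtain ⟨hp, hS⟩ := holds_charFml.1 hpq
    rwa [show q = p from Subtype.ext (Prod.ext hS hp.symm)] at hq
  · exact fun hp => ⟨_, ⟨p, hp, rfl⟩, holds_charFml.2 ⟨rfl, rfl⟩⟩

open Classical in
theorem prv_iff_normalForm {φ : Fml} (hφ : Is1Formula φ) :
    Prv Ax (Fml.iff φ (normalForm (·.Satisfies φ))) := by
  have hNF : Prv Ax (imp (normalForm (·.Satisfies φ)) φ) := by
    refine Prv.disj_imp fun ψ hψ => ?_
    obtain ⟨p, hp, rfl⟩ := List.mem_map.1 hψ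
    exact (prv_charFml_imp_of_holds hφ p.1.1 ⟨p.1.2, p.2⟩).1
      (Finset.mem_filter.1 (Finset.mem_toList.1 hp)).2
  have hφNF : Prv Ax (imp φ (normalForm (·.Satisfies φ))) := by
    refine Prv.of_forall_profile fun S => Prv.profile_imp_of_forall fun t => ?_
    by_cases ht : t ∈ S
    · let p : Pointed := ⟨(S, t), ht⟩
      by_cases hp : p.Satisfies φ
      · have hNF : Prv Ax (imp (charFml S t) (normalForm (·.Satisfies φ))) :=
          Prv.imp_disj_of_mem (List.mem_map.2 ⟨p, by simpa using hp, rfl⟩)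
        exact Prv.taut_mp (fun v => by simp; grind) hNF
      · exact Prv.taut_mp (fun v => by simp [evalProp]; grind)
          ((prv_charFml_imp_of_holds hφ S ⟨t, ht⟩).2 hp)
    · exact Prv.charFml_imp_of_not_mem ht _
  exact Prv.taut_mp₂ (fun v => by simp [Fml.iff, evalProp]; grind) hφNF hNF

theorem prv_iff_of_forall_satisfies_iff {φ ψ : Fml} (hφ : Is1Formula φ) (hψ : Is1Formula ψ)
    (h : ∀ p : Pointed, p.Satisfies φ ↔ p.Satisfies ψ) : Prv Ax (Fml.iff φ ψ) := by
  have hφψ := prv_iff_normalForm (Ax := Ax) hφ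
  rw [show (·.Satisfies φ) = (·.Satisfies ψ) from funext fun p => propext (h p)] at hφψ
  exact Prv.taut_mp₂ (fun v => by simp [Fml.iff, evalProp]; grind) hφψ (prv_iff_normalForm hψ)

end Completeness

theorem card_pointed : Fintype.card Pointed = 32 := by decide

/-- up to S5-provable equivalence there are exactly
`2^32 = 4294967296` one-variable formulas. -/
theorem count_one_formulas_S5 :
    Nat.card (Quot (fun φ ψ : {f : Fml // Is1Formula f} =>
      Prv (∅ : Set Fml) (Fml.iff φ.1 ψ.1))) = 4294967296 := by
  let models : Quot (fun φ ψ : {f : Fml // Is1Formula f} => Prv ∅ (Fml.iff φ.1 ψ.1)) →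
      (Pointed → Prop) :=
    Quot.lift (fun φ p => p.Satisfies φ.1) fun φ ψ h =>
      funext fun p => propext (p.satisfies_iff_of_prv h)
  have hmodels : models.Bijective := by
    refine ⟨?_, fun A => ⟨Quot.mk _ ⟨normalForm A, is1Formula_normalForm A⟩,
      funext fun p => propext (p.satisfies_normalForm A)⟩⟩
    rintro ⟨φ⟩ ⟨ψ⟩ h
    exact Quot.sound (prv_iff_of_forall_satisfies_iff φ.2 ψ.2 fun p => Iff.of_eq (congrFun h p))
  rw [Nat.card_eq_of_bijective models hmodels, Nat.card_fun, Nat.card_eq_fintype_card,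
    Nat.card_eq_fintype_card, Fintype.card_prop, card_pointed]
  norm_num

end KripkeModal
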